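/- arXiv:2309.07070 — 2 statements merged into one kernel-verified Lean document; each statement's English description precedes it below -/
import Mathlib

section
/- For every n ≥ 1, φ(M_{2n+1})·0 = M_{2n+2} and φ(M_{2n+2}) = 0·M_{2n+3}, where M_k are the minimal forbidden words of the Fibonacci word. -/
/-- The Fibonacci morphism: `false` (=0) ↦ 01, `true` (=1) ↦ 0. -/
def phi (w : List Bool) : List Bool :=
  w.flatMap (fun b => if b then [false] else [false, true])

/-- The Fibonacci words: f₁ = 1, f₂ = 0, f_{n+2} = f_{n+1} f_n. -/
def fw : ℕ → List Bool
  | 0 => []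
  | 1 => [true]
  | 2 => [false]
  | (n+3) => fw (n+2) ++ fw (n+1)

/-- Palindromic prefix: f_n with its last two letters removed. -/
def pw (n : ℕ) : List Bool := (fw n).dropLast.dropLast

/-- Minimal forbidden words of the Fibonacci word:
`M_{2n+1} = 1 p_{2n+1} 1`, `M_{2n+2} = 0 p_{2n+2} 0`. -/
def Mw (n : ℕ) : List Bool :=
  if n % 2 = 0 then false :: (pw n ++ [false]) else true :: (pw n ++ [true])

/-- Correlation bit: `corr u v k` holds iff `C_{u,v}[k] = 1`. -/
def corr {α : Type*} (u v : List α) (k : ℕ) : Prop :=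
  ∀ i j : ℕ, i < u.length → j < v.length → i = j + k → u[i]? = v[j]?

/-- A border of a word is both a prefix and a suffix. -/
def IsBorder {α : Type*} (b w : List α) : Prop := b <+: w ∧ b <:+ w

/-- The set of nonempty borders of `M_n`. -/
def Bset (n : ℕ) : Set (List Bool) := {b | b ≠ [] ∧ IsBorder b (Mw n)}

open scoped Classical in
/-- The correlation polynomial `C_{u,v}(z) = ∑_{k<|u|} C_{u,v}[k] z^{|u|-1-k}`. -/
noncomputable def corrPoly (u v : List Bool) : Polynomial ℤ :=
  ∑ k ∈ Finset.range u.length,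
    if corr u v k then Polynomial.X ^ (u.length - 1 - k) else 0

open scoped Classical in
/-- The nonempty borders of `w`, as a finset. -/
noncomputable def borderFinset (w : List Bool) : Finset (List Bool) :=
  ((Finset.range (w.length + 1)).image (fun k => w.take k)).filter
    (fun b => b ≠ [] ∧ b <:+ w)


/-! Since `φ(f_n) = f_{n+1}` and the last two letters of `f_n` (`n ≥ 3`) alternate between `01`
and `10`, comparing `φ(p_n · ab) = φ(p_n) · 0 · ba` with `f_{n+1} = p_{n+1} · ba` gives
`φ(p_n) · 0 = p_{n+1}`. The claims follow from `φ(1) = 0` and `φ(0) = 01` applied to the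
outer letters of `M_k`. -/

@[simp]
lemma phi_nil : phi [] = [] := rfl

@[simp]
lemma phi_append (u v : List Bool) : phi (u ++ v) = phi u ++ phi v :=
  List.flatMap_append

@[simp]
lemma phi_cons (b : Bool) (w : List Bool) :
    phi (b :: w) = (if b then [false] else [false, true]) ++ phi w :=
  List.flatMap_cons

lemma phi_fw : ∀ n, phi (fw (n + 1)) = fw (n + 2)
  | 0 => rfl
  | 1 => rfl
  | n + 2 => by
      change phi (fw (n + 2) ++ fw (n + 1)) = fw (n + 3) ++ fw (n + 2)
      rw [phi_append, phi_fw (n + 1), phi_fw n]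

lemma exists_fw_eq_append_bodd : ∀ n, ∃ p, fw (n + 3) = p ++ [n.bodd, !n.bodd]
  | 0 => ⟨[], rfl⟩
  | 1 => ⟨[false], rfl⟩
  | n + 2 => by
      obtain ⟨p, hp⟩ := exists_fw_eq_append_bodd n
      refine ⟨fw (n + 4) ++ p, ?_⟩
      change fw (n + 4) ++ fw (n + 3) = _
      simp [hp]

lemma fw_eq_pw_append_bodd (n : ℕ) : fw (n + 3) = pw (n + 3) ++ [n.bodd, !n.bodd] := by
  obtain ⟨p, hp⟩ := exists_fw_eq_append_bodd n
  rw [pw, hp]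
  simp

lemma phi_pw_append_false {n : ℕ} (hn : 3 ≤ n) : phi (pw n) ++ [false] = pw (n + 1) := by
  obtain ⟨n, rfl⟩ := Nat.exists_eq_add_of_le' hn
  have h : phi (fw (n + 3)) = fw (n + 4) := phi_fw (n + 2)
  rw [fw_eq_pw_append_bodd, fw_eq_pw_append_bodd (n + 1), phi_append, Nat.bodd_succ] at h
  apply List.append_cancel_right (bs := [!n.bodd, n.bodd])
  generalize n.bodd = b at h ⊢
  cases b <;> simpa using h

lemma Mw_of_odd {n : ℕ} (hn : n % 2 = 1) : Mw n = true :: (pw n ++ [true]) := by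
  simp [Mw, hn]

lemma Mw_of_even {n : ℕ} (hn : n % 2 = 0) : Mw n = false :: (pw n ++ [false]) := by
  simp [Mw, hn]

theorem stmt6 (n : ℕ) (hn : 1 ≤ n) :
    phi (Mw (2*n+1)) ++ [false] = Mw (2*n+2) ∧
    phi (Mw (2*n+2)) = false :: Mw (2*n+3) := by
  have hodd : phi (pw (2 * n + 1)) ++ [false] = pw (2 * n + 2) :=
    phi_pw_append_false (by omega)
  have heven : phi (pw (2 * n + 2)) ++ [false] = pw (2 * n + 3) :=
    phi_pw_append_false (by omega)
  rw [Mw_of_odd (by omega : (2 * n + 1) % 2 = 1), Mw_of_even (by omega : (2 * n + 2) % 2 = 0),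
    Mw_of_odd (by omega : (2 * n + 3) % 2 = 1)]
  constructor
  · simp [← hodd]
  · simp [← heven]
end

section
/- For n ≥ 1, the set of nonempty borders of M_{2n+2} is exactly {0} ∪ {M_{2n+2}} ∪ { 0·p_{2(n−i)+1}·0 : 0 ≤ i ≤ n−1 }, and the set of nonempty borders of M_{2n+3} is exactly {1} ∪ {M_{2n+3}} ∪ { 1·p_{2(n−i)+2}·1 : 0 ≤ i ≤ n−1 }. -/
/-!
`M_N = c p_N c` is a palindrome because `p_N` is, so its borders are its palindromic prefixes:
`c`, `M_N` itself, and the words `c z c` with `z` a palindromic prefix of `p_N` followed by `c`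
in `p_N`. The palindromic prefixes of `p_N` are exactly the `p_j` with `3 ≤ j ≤ N`, and `p_j` is
followed in `p_N` by `0` for odd `j` and by `1` for even `j`.

A palindromic prefix strictly between `p_{N-1}` and `p_N` would have `p_{N-1}` as a border, so
`f_{N-2}` would occur in `f_{N-2} f_{N-2}` at a proper shift `d`. The two pieces of `f_{N-2}` cut
at `d` would then commute, which forces `|f_{N-2}|` to divide `d` times the number of `1`s of
`f_{N-2}`; this is impossible, since these two counts are the coprime Fibonacci numbers
`F_{N-2}` and `F_{N-4}`.
-/

open List

-- For `n ≥ 3` this is the penultimate letter of `fw n`, i.e. the letter following `pw n`.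
def penult (n : ℕ) : Bool := decide (n % 2 = 0)

lemma penult_succ (n : ℕ) : penult (n + 1) = !penult n := by
  simp only [penult]
  rcases Nat.mod_two_eq_zero_or_one n with h | h <;> simp [Nat.add_mod, h]

lemma penult_add_two (n : ℕ) : penult (n + 2) = penult n := by
  rw [penult_succ, penult_succ, Bool.not_not]

lemma fw_add_three (k : ℕ) : fw (k + 3) = fw (k + 2) ++ fw (k + 1) := rfl

lemma length_fw : ∀ n, (fw n).length = Nat.fib n
  | 0 | 1 | 2 => rfl
  | k + 3 => by
    rw [fw_add_three, length_append, length_fw (k + 2), length_fw (k + 1),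
      Nat.fib_add_two (n := k + 1), add_comm]

lemma count_true_fw : ∀ k, (fw (k + 2)).count true = Nat.fib k
  | 0 | 1 => rfl
  | k + 2 => by
    rw [fw_add_three, count_append, count_true_fw (k + 1), count_true_fw k,
      Nat.fib_add_two, add_comm]

lemma two_le_length_fw (k : ℕ) : 2 ≤ (fw (k + 3)).length := by
  rw [length_fw]
  exact Nat.fib_mono (a := 3) (by omega)

lemma pw_add_five_eq_fw_add_four_append (k : ℕ) : pw (k + 5) = fw (k + 4) ++ pw (k + 3) := by
  have hlen := two_le_length_fw k
  have hne : fw (k + 3) ≠ [] := ne_nil_of_length_pos (by omega)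
  have hne' : (fw (k + 3)).dropLast ≠ [] := ne_nil_of_length_pos (by rw [length_dropLast]; omega)
  simp only [pw, fw_add_three (k + 2), dropLast_append_of_ne_nil hne,
    dropLast_append_of_ne_nil hne']

lemma fw_eq_pw_append : ∀ k, fw (k + 3) = pw (k + 3) ++ [penult (k + 3), !penult (k + 3)]
  | 0 | 1 => rfl
  | k + 2 => by
    rw [fw_add_three, fw_eq_pw_append k, pw_add_five_eq_fw_add_four_append,
      show k + 2 + 3 = k + 3 + 2 by rfl, penult_add_two (k + 3), append_assoc]

lemma length_pw (k : ℕ) : (pw (k + 3)).length + 2 = Nat.fib (k + 3) := by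
  rw [← length_fw, fw_eq_pw_append, length_append, length_cons, length_singleton]

lemma pw_add_five_eq_fw_add_three_append : ∀ k, pw (k + 5) = fw (k + 3) ++ pw (k + 4)
  | 0 => rfl
  | k + 1 => by
    rw [pw_add_five_eq_fw_add_four_append, fw_add_three (k + 2), append_assoc,
      ← pw_add_five_eq_fw_add_three_append k]

lemma pw_add_five_eq_pw_add_four_append (k : ℕ) :
    pw (k + 5) = pw (k + 4) ++ penult (k + 4) :: (!penult (k + 4)) :: pw (k + 3) := by
  rw [pw_add_five_eq_fw_add_four_append, fw_eq_pw_append (k + 1)]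
  simp

lemma pw_add_five_eq_pw_add_three_append (k : ℕ) :
    pw (k + 5) = pw (k + 3) ++ penult (k + 3) :: (!penult (k + 3)) :: pw (k + 4) := by
  rw [pw_add_five_eq_fw_add_three_append, fw_eq_pw_append]
  simp

lemma reverse_pw : ∀ n, (pw n).reverse = pw n
  | 0 | 1 | 2 | 3 | 4 => rfl
  | k + 5 => by
    conv_lhs => rw [pw_add_five_eq_pw_add_four_append]
    rw [pw_add_five_eq_pw_add_three_append]
    simp [reverse_pw (k + 3), reverse_pw (k + 4), penult_succ]

lemma palindrome_pw (n : ℕ) : (pw n).Palindrome := .of_reverse_eq (reverse_pw n)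

lemma pw_prefix_pw_succ : ∀ n, pw n <+: pw (n + 1)
  | 0 | 1 | 2 | 3 => nil_prefix
  | k + 4 => by
    rw [pw_add_five_eq_pw_add_four_append]
    exact prefix_append _ _

lemma pw_prefix_pw {j N : ℕ} (h : j ≤ N) : pw j <+: pw N := by
  induction N, h using Nat.le_induction with
  | base => exact prefix_refl _
  | succ N _ ih => exact ih.trans (pw_prefix_pw_succ N)

lemma pw_prefix_fw : ∀ n, pw n <+: fw n
  | 0 | 1 | 2 => nil_prefix
  | k + 3 => by
    rw [fw_eq_pw_append]
    exact prefix_append _ _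

lemma pw_append_penult_prefix_pw {j N : ℕ} (hj : 3 ≤ j) (hjN : j < N) :
    pw j ++ [penult j] <+: pw N := by
  refine .trans ?_ (pw_prefix_pw (Nat.succ_le_of_lt hjN))
  obtain ⟨k, rfl⟩ : ∃ k, j = k + 3 := ⟨j - 3, by omega⟩
  cases k with
  | zero => exact prefix_refl _
  | succ k =>
    rw [pw_add_five_eq_pw_add_four_append]
    simp

theorem List.length_mul_count_eq_of_append_comm {α : Type*} [BEq α] [LawfulBEq α] (a : α)
    {x y : List α} (h : x ++ y = y ++ x) : x.length * y.count a = y.length * x.count a := by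
  induction hn : x.length + y.length using Nat.strong_induction_on generalizing x y with
  | _ n ih =>
  wlog hxy : x.length ≤ y.length generalizing x y
  · exact (this h.symm (by omega) (by omega)).symm
  obtain ⟨y, rfl⟩ : x <+: y :=
    prefix_of_prefix_length_le (h ▸ prefix_append x y) (prefix_append y x) hxy
  by_cases hx : x = []
  · simp [hx]
  have hcomm : x ++ y = y ++ x := by simpa using h
  have := ih (x.length + y.length) (by simp [← hn, length_pos_of_ne_nil hx]) hcomm rfl
  rw [count_append, length_append, mul_add, this, ← add_mul]

lemma not_fw_prefix_drop_fw_append_fw (k d : ℕ) (hd0 : 0 < d) (hd : d < Nat.fib (k + 2)) :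
    ¬ fw (k + 2) <+: (fw (k + 2) ++ fw (k + 2)).drop d := by
  set u := fw (k + 2)
  have hlen : u.length = Nat.fib (k + 2) := length_fw _
  intro h
  rw [drop_append_of_le_length (by omega), prefix_iff_eq_take, take_append, length_drop,
    Nat.sub_sub_self (by omega), take_of_length_le (by simp)] at h
  have hcomm : take d u ++ drop d u = drop d u ++ take d u := by
    rwa [take_append_drop]
  have hcount := length_mul_count_eq_of_append_comm true hcomm
  rw [length_take_of_le (by omega), length_drop] at hcount
  have hdvd : Nat.fib (k + 2) ∣ d * Nat.fib k := by
    refine ⟨(take d u).count true, ?_⟩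
    rw [← count_true_fw, ← take_append_drop d (fw (k + 2)), count_append, mul_add, hcount,
      ← add_mul, ← hlen]
    congr 1
    omega
  have hcop : (Nat.fib (k + 2)).Coprime (Nat.fib k) := by
    rw [Nat.fib_add_two, add_comm, Nat.coprime_add_self_left]
    exact (Nat.fib_coprime_fib_succ k).symm
  have := Nat.le_of_dvd hd0 (hcop.dvd_of_dvd_mul_right hdvd)
  omega

lemma fw_append_fw_prefix_fw (k : ℕ) : fw (k + 4) ++ fw (k + 4) <+: fw (k + 6) := by
  have h : fw (k + 6) = fw (k + 4) ++ (fw (k + 3) ++ (fw (k + 2) ++ fw (k + 1) ++ fw (k + 2))) := by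
    simp [fw_add_three]
  rw [h, prefix_append_right_inj, fw_add_three (k + 1), prefix_append_right_inj,
    append_assoc]
  exact prefix_append _ _

lemma not_fw_prefix_drop_fw (k d : ℕ) (hd0 : 0 < d) (hd : d < Nat.fib (k + 4)) :
    ¬ fw (k + 4) <+: (fw (k + 6)).drop d := fun h =>
  not_fw_prefix_drop_fw_append_fw (k + 2) d hd0 hd <|
    prefix_of_prefix_length_le h ((fw_append_fw_prefix_fw k).drop d) <| by
      simp only [length_drop, length_append, length_fw, show k + 2 + 2 = k + 4 from rfl]
      omega

lemma length_le_of_palindrome_prefix_pw {k : ℕ} {w : List Bool} (hw : w <+: pw (k + 6))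
    (hpal : w.Palindrome) (hlt : w.length < (pw (k + 6)).length) :
    w.length ≤ (pw (k + 5)).length := by
  by_contra! hgt
  have h5 : (pw (k + 5)).length + 2 = Nat.fib (k + 5) := length_pw (k + 2)
  have h6 : (pw (k + 6)).length + 2 = Nat.fib (k + 6) := length_pw (k + 3)
  have hfib : Nat.fib (k + 6) = Nat.fib (k + 4) + Nat.fib (k + 5) := Nat.fib_add_two
  set d := w.length - (pw (k + 5)).length
  have hpre : pw (k + 5) <+: w := prefix_of_prefix_length_le (pw_prefix_pw (by omega)) hw hgt.le
  have hsuf : pw (k + 5) <:+ w := by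
    rw [← reverse_prefix, reverse_pw, hpal.reverse_eq]
    exact hpre
  have hfw : fw (k + 4) <+: (fw (k + 6)).drop d := calc
    fw (k + 4) <+: pw (k + 5) := pw_add_five_eq_fw_add_four_append k ▸ prefix_append _ _
    _ = w.drop d := suffix_iff_eq_drop.mp hsuf
    _ <+: (fw (k + 6)).drop d := (hw.trans (pw_prefix_fw _)).drop d
  exact not_fw_prefix_drop_fw k d (by omega) (by omega) hfw

lemma palindrome_prefix_pw_succ {N : ℕ} (hN : 3 ≤ N) {w : List Bool} (hw : w <+: pw (N + 1))
    (hpal : w.Palindrome) : w.length ≤ (pw N).length ∨ w = pw (N + 1) := by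
  refine or_iff_not_imp_right.mpr fun hne => ?_
  have hlt : w.length < (pw (N + 1)).length :=
    lt_of_le_of_ne hw.length_le fun h => hne (hw.eq_of_length h)
  obtain ⟨k, rfl⟩ : ∃ k, N = k + 3 := ⟨N - 3, by omega⟩
  match k, hw, hlt with
  | 0, _, hlt => exact Nat.le_of_lt_succ hlt
  | 1, hw, hlt =>
    by_contra! hgt
    have hlen : w.length = 2 := by
      change w.length < 3 at hlt
      change 1 < w.length at hgt
      omega
    rw [prefix_iff_eq_take, hlen] at hw
    subst hw
    exact absurd hpal.reverse_eq (by decide)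
  | k + 2, hw, hlt => exact length_le_of_palindrome_prefix_pw hw hpal hlt

lemma eq_pw_of_palindrome_prefix_pw {N : ℕ} (hN : 3 ≤ N) {w : List Bool} (hw : w <+: pw N)
    (hpal : w.Palindrome) : ∃ j, 3 ≤ j ∧ j ≤ N ∧ w = pw j := by
  induction N, hN using Nat.le_induction generalizing w with
  | base => exact ⟨3, le_rfl, le_rfl, prefix_nil.mp hw⟩
  | succ N hN ih =>
    rcases palindrome_prefix_pw_succ hN hw hpal with hle | rfl
    · obtain ⟨j, hj3, hjN, rfl⟩ :=
        ih (prefix_of_prefix_length_le hw (pw_prefix_pw N.le_succ) hle) hpal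
      exact ⟨j, hj3, hjN.trans N.le_succ, rfl⟩
    · exact ⟨N + 1, by omega, le_rfl, rfl⟩

lemma palindrome_and_append_prefix_pw_iff {N : ℕ} (hN : 3 ≤ N) {z : List Bool} {a : Bool} :
    z.Palindrome ∧ z ++ [a] <+: pw N ↔ ∃ j, 3 ≤ j ∧ j < N ∧ penult j = a ∧ z = pw j := by
  constructor
  · rintro ⟨hpal, hpre⟩
    obtain ⟨j, hj3, hjN, rfl⟩ :=
      eq_pw_of_palindrome_prefix_pw hN ((prefix_append _ _).trans hpre) hpal
    have hjN : j < N := lt_of_le_of_ne hjN fun h => by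
      subst h
      simpa using hpre.length_le
    have hnext := pw_append_penult_prefix_pw hj3 hjN
    have := (prefix_of_prefix_length_le hpre hnext (by simp)).eq_of_length (by simp)
    exact ⟨j, hj3, hjN, by simpa using this.symm, rfl⟩
  · rintro ⟨j, hj3, hjN, rfl, rfl⟩
    exact ⟨palindrome_pw j, pw_append_penult_prefix_pw hj3 hjN⟩

theorem List.isBorder_iff_of_palindrome {α : Type*} {b w : List α} (hw : w.Palindrome) :
    IsBorder b w ↔ b <+: w ∧ b.Palindrome := by
  constructor
  · rintro ⟨hpre, hsuf⟩
    have hrev : b.reverse <+: w := hw.reverse_eq ▸ reverse_prefix.mpr hsuf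
    exact ⟨hpre, .of_reverse_eq
      ((prefix_of_prefix_length_le hrev hpre (by simp)).eq_of_length (by simp))⟩
  · rintro ⟨hpre, hb⟩
    refine ⟨hpre, ?_⟩
    rw [← reverse_prefix, hb.reverse_eq, hw.reverse_eq]
    exact hpre

theorem List.ne_nil_and_isBorder_cons_append_iff {α : Type*} {c : α} {P b : List α}
    (hP : P.Palindrome) :
    b ≠ [] ∧ IsBorder b (c :: (P ++ [c])) ↔
      b = [c] ∨ b = c :: (P ++ [c]) ∨
        ∃ z, z.Palindrome ∧ z ++ [c] <+: P ∧ b = c :: (z ++ [c]) := by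
  have hM : (c :: (P ++ [c])).Palindrome := hP.cons_concat c
  rw [isBorder_iff_of_palindrome hM]
  constructor
  · rintro ⟨hne, hpre, hb⟩
    cases hb with
    | nil => exact absurd rfl hne
    | singleton x =>
      obtain ⟨rfl, -⟩ := cons_prefix_cons.mp hpre
      exact .inl rfl
    | cons_concat x hz =>
      obtain ⟨rfl, hzP⟩ := cons_prefix_cons.mp hpre
      rcases hzP.length_le.eq_or_lt with heq | hlt
      · exact .inr (.inl (by rw [hzP.eq_of_length heq]))
      · refine .inr (.inr ⟨_, hz, prefix_of_prefix_length_le hzP (prefix_append P [x]) ?_, rfl⟩)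
        simp only [length_append, length_singleton] at hlt ⊢
        omega
  · rintro (rfl | rfl | ⟨z, hz, hzP, rfl⟩)
    · exact ⟨cons_ne_nil _ _, cons_prefix_cons.mpr ⟨rfl, nil_prefix⟩, .singleton c⟩
    · exact ⟨cons_ne_nil _ _, prefix_refl _, hM⟩
    · exact ⟨cons_ne_nil _ _, cons_prefix_cons.mpr ⟨rfl, hzP.trans (prefix_append _ _)⟩,
        hz.cons_concat c⟩

lemma Mw_eq (N : ℕ) : Mw N = (!penult N) :: (pw N ++ [!penult N]) := by
  unfold Mw penult
  split_ifs with h <;> simp [h]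

lemma penult_eq_not_penult_iff {j N : ℕ} : penult j = !penult N ↔ j % 2 ≠ N % 2 := by
  unfold penult
  rcases Nat.mod_two_eq_zero_or_one j with hj | hj <;>
    rcases Nat.mod_two_eq_zero_or_one N with hN | hN <;> simp [hj, hN]

lemma Bset_eq {N : ℕ} (hN : 3 ≤ N) :
    Bset N = {[!penult N]} ∪ {Mw N} ∪
      {w | ∃ i, 2 * i + 3 < N ∧ w = (!penult N) :: (pw (N - 1 - 2 * i) ++ [!penult N])} := by
  ext b
  simp only [Bset, Set.mem_ofPred_eq, Set.mem_union, Set.mem_singleton_iff, or_assoc, Mw_eq,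
    ne_nil_and_isBorder_cons_append_iff (palindrome_pw N)]
  refine or_congr_right (or_congr_right ⟨?_, ?_⟩)
  · rintro ⟨z, hz, hzP, rfl⟩
    obtain ⟨j, hj3, hjN, hpar, rfl⟩ := (palindrome_and_append_prefix_pw_iff hN).mp ⟨hz, hzP⟩
    rw [penult_eq_not_penult_iff] at hpar
    exact ⟨(N - 1 - j) / 2, by omega, by rw [show N - 1 - 2 * ((N - 1 - j) / 2) = j by omega]⟩
  · rintro ⟨i, hi, rfl⟩
    obtain ⟨hz, hzP⟩ := (palindrome_and_append_prefix_pw_iff hN).mpr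
      ⟨N - 1 - 2 * i, by omega, by omega, (penult_eq_not_penult_iff (N := N)).mpr (by omega), rfl⟩
    exact ⟨_, hz, hzP, rfl⟩

theorem stmt15 (n : ℕ) (hn : 1 ≤ n) :
    Bset (2*n+2) =
      {[false]} ∪ {Mw (2*n+2)} ∪
        {w | ∃ i ≤ n - 1, w = false :: (pw (2*(n-i)+1) ++ [false])} ∧
    Bset (2*n+3) =
      {[true]} ∪ {Mw (2*n+3)} ∪
        {w | ∃ i ≤ n - 1, w = true :: (pw (2*(n-i)+2) ++ [true])} := by
  have hc₁ : (!penult (2 * n + 2)) = false := by simp [penult]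
  have hc₂ : (!penult (2 * n + 3)) = true := by simp [penult, Nat.add_mod]
  constructor
  · rw [Bset_eq (by omega), hc₁]
    congr 1
    ext w
    refine exists_congr fun i => ⟨fun ⟨hi, hw⟩ => ⟨by omega, ?_⟩, fun ⟨hi, hw⟩ => ⟨by omega, ?_⟩⟩ <;>
      rwa [show 2 * n + 2 - 1 - 2 * i = 2 * (n - i) + 1 by omega] at *
  · rw [Bset_eq (by omega), hc₂]
    congr 1
    ext w
    refine exists_congr fun i => ⟨fun ⟨hi, hw⟩ => ⟨by omega, ?_⟩, fun ⟨hi, hw⟩ => ⟨by omega, ?_⟩⟩ <;>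
      rwa [show 2 * n + 3 - 1 - 2 * i = 2 * (n - i) + 2 by omega] at *
end
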